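/- (König) Every bipartite loopless multigraph G satisfies χ'(G) = Δ(G), i.e., G has a proper edge-coloring with Δ(G) colors. -/

import Mathlib

/-- A proper `k`-edge-coloring of the loopless multigraph with multiplicity function `w`. -/
def IsProperEdgeColoringMG {V : Type} [Fintype V] [DecidableEq V]
    (w : V → V → ℕ) (k : ℕ) (M : Fin k → V → V → Bool) : Prop :=
  (∀ i u v, M i u v = M i v u) ∧
  (∀ i u, (Finset.univ.filter fun v => M i u v = true).card ≤ 1) ∧
  (∀ u v, w u v = (Finset.univ.filter fun i => M i u v = true).card)

open Finset in
/-- Any `k`-doubly-regular nonnegative integer matrix decomposes into `k` permutation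
matrices (Birkhoff–von Neumann for integer matrices, via Hall's theorem). -/
lemma koenig_aux_decomp {V : Type} [Fintype V] [DecidableEq V] :
    ∀ (k : ℕ) (A : V → V → ℕ), (∀ u, ∑ v, A u v = k) → (∀ v, ∑ u, A u v = k) →
    ∃ σ : Fin k → Equiv.Perm V, ∀ u v, A u v = ∑ i, if σ i u = v then 1 else 0 := by
  intro k
  induction k with
  | zero =>
    intro A hrow _
    refine ⟨fun i => i.elim0, fun u v => ?_⟩
    have h1 : A u v = 0 := by
      have := hrow u
      have h2 : A u v ≤ ∑ v, A u v := Finset.single_le_sum (fun _ _ => Nat.zero_le _) (mem_univ v)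
      omega
    simp [h1]
  | succ n ih =>
    intro A hrow hcol
    -- Hall's condition for the bipartite support graph of `A`
    have hall : ∀ s : Finset V, s.card ≤ (s.biUnion fun u => univ.filter fun v => 0 < A u v).card := by
      intro s
      set T := s.biUnion fun u => univ.filter fun v => 0 < A u v with hT
      have key : (n+1) * s.card ≤ (n+1) * T.card := by
        calc (n+1) * s.card = ∑ u ∈ s, (n+1) := by rw [Finset.sum_const, smul_eq_mul, mul_comm]
        _ = ∑ u ∈ s, ∑ v ∈ T, A u v := by
            refine Finset.sum_congr rfl fun u hu => ?_
            rw [← hrow u]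
            refine (Finset.sum_subset (Finset.subset_univ T) ?_).symm
            intro v _ hv
            by_contra h
            exact hv (Finset.mem_biUnion.2 ⟨u, hu, Finset.mem_filter.2 ⟨mem_univ v, Nat.pos_of_ne_zero h⟩⟩)
        _ = ∑ v ∈ T, ∑ u ∈ s, A u v := Finset.sum_comm
        _ ≤ ∑ v ∈ T, ∑ u, A u v := by
            refine Finset.sum_le_sum fun v _ => Finset.sum_le_sum_of_subset (Finset.subset_univ s)
        _ = ∑ v ∈ T, (n+1) := by refine Finset.sum_congr rfl fun v _ => hcol v
        _ = (n+1) * T.card := by rw [Finset.sum_const, smul_eq_mul, mul_comm]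
      exact Nat.le_of_mul_le_mul_left key (Nat.succ_pos n)
    obtain ⟨f, hfinj, hf⟩ := (Finset.all_card_le_biUnion_card_iff_exists_injective _).mp hall
    have hfbij : Function.Bijective f := Finite.injective_iff_bijective.mp hfinj
    let σ0 : Equiv.Perm V := Equiv.ofBijective f hfbij
    have hσ0 : ∀ u, 0 < A u (σ0 u) := by
      intro u
      have := hf u
      exact (Finset.mem_filter.mp this).2
    set A' : V → V → ℕ := fun u v => A u v - (if σ0 u = v then 1 else 0) with hA'
    have hsplit : ∀ u v, A u v = A' u v + (if σ0 u = v then 1 else 0) := by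
      intro u v
      simp only [hA']
      split
      · next h => have := hσ0 u; rw [h] at this; omega
      · omega
    have hrow' : ∀ u, ∑ v, A' u v = n := by
      intro u
      have h1 : ∑ v, A u v = (∑ v, A' u v) + ∑ v, (if σ0 u = v then 1 else 0) := by
        rw [← Finset.sum_add_distrib]; exact Finset.sum_congr rfl fun v _ => hsplit u v
      have h2 : ∑ v, (if σ0 u = v then 1 else 0) = 1 := by simp
      have := hrow u; omega
    have hcol' : ∀ v, ∑ u, A' u v = n := by
      intro v
      have h1 : ∑ u, A u v = (∑ u, A' u v) + ∑ u, (if σ0 u = v then 1 else 0) := by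
        rw [← Finset.sum_add_distrib]; exact Finset.sum_congr rfl fun u _ => hsplit u v
      have h2 : ∑ u, (if σ0 u = v then 1 else 0) = 1 := by
        simp [Equiv.apply_eq_iff_eq_symm_apply]
      have := hcol v; omega
    obtain ⟨σ', hσ'⟩ := ih A' hrow' hcol'
    refine ⟨Fin.cases σ0 σ', fun u v => ?_⟩
    rw [Fin.sum_univ_succ]
    simp only [Fin.cases_zero, Fin.cases_succ]
    show A u v = (if σ0 u = v then 1 else 0) + ∑ i, if (σ' i) u = v then 1 else 0
    rw [← hσ' u v]
    have := hsplit u v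
    omega

open Finset in
/-- Any nonnegative integer matrix with row and column sums at most `k` can be increased
entrywise to one with all row and column sums exactly `k`. -/
lemma koenig_aux_complete {V : Type} [Fintype V] [DecidableEq V] (k : ℕ) :
    ∀ (d : ℕ) (A : V → V → ℕ), (∑ u, (k - ∑ v, A u v)) = d →
    (∀ u, ∑ v, A u v ≤ k) → (∀ v, ∑ u, A u v ≤ k) →
    ∃ A' : V → V → ℕ, (∀ u v, A u v ≤ A' u v) ∧ (∀ u, ∑ v, A' u v = k) ∧ (∀ v, ∑ u, A' u v = k) := by
  intro d
  induction d with
  | zero =>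
    intro A hdef hrow hcol
    have hrow' : ∀ u, ∑ v, A u v = k := by
      intro u
      have h1 : k - ∑ v, A u v ≤ 0 := hdef ▸ Finset.single_le_sum (f := fun u => k - ∑ v, A u v)
        (fun _ _ => Nat.zero_le _) (mem_univ u)
      have := hrow u; omega
    refine ⟨A, fun _ _ => le_refl _, hrow', ?_⟩
    have htot : ∑ v, ∑ u, A u v = Fintype.card V * k := by
      rw [Finset.sum_comm]
      simp [hrow', Finset.sum_const, Finset.card_univ, mul_comm]
    intro v
    by_contra h
    have hlt : ∑ u, A u v < k := lt_of_le_of_ne (hcol v) h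
    have : ∑ v, ∑ u, A u v < ∑ v : V, k :=
      Finset.sum_lt_sum (fun w _ => hcol w) ⟨v, Finset.mem_univ v, hlt⟩
    rw [htot] at this
    simp [Finset.sum_const, Finset.card_univ, mul_comm] at this
  | succ n ih =>
    intro A hdef hrow hcol
    have hex : ∃ u₀, ∑ v, A u₀ v < k := by
      by_contra h
      push_neg at h
      have : ∀ u, k - ∑ v, A u v = 0 := fun u => by have := h u; omega
      simp [this] at hdef
    obtain ⟨u₀, hu₀⟩ := hex
    have hexc : ∃ v₀, ∑ u, A u v₀ < k := by
      by_contra h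
      push_neg at h
      have hc : ∀ v, ∑ u, A u v = k := fun v => le_antisymm (hcol v) (h v)
      have h1 : ∑ u, ∑ v, A u v = Fintype.card V * k := by
        rw [Finset.sum_comm]; simp [hc, Finset.sum_const, Finset.card_univ, mul_comm]
      have h2 : ∑ u, ∑ v, A u v < ∑ u : V, k :=
        Finset.sum_lt_sum (fun u _ => hrow u) ⟨u₀, Finset.mem_univ u₀, hu₀⟩
      rw [h1] at h2
      simp [Finset.sum_const, Finset.card_univ, mul_comm] at h2
    obtain ⟨v₀, hv₀⟩ := hexc
    set A₁ : V → V → ℕ := fun u v => A u v + (if u = u₀ ∧ v = v₀ then 1 else 0) with hA₁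
    have hrow₁ : ∀ u, ∑ v, A₁ u v = (∑ v, A u v) + (if u = u₀ then 1 else 0) := by
      intro u
      simp only [hA₁]
      rw [Finset.sum_add_distrib]
      congr 1
      by_cases h : u = u₀ <;> simp [h]
    have hcol₁ : ∀ v, ∑ u, A₁ u v = (∑ u, A u v) + (if v = v₀ then 1 else 0) := by
      intro v
      simp only [hA₁]
      rw [Finset.sum_add_distrib]
      congr 1
      by_cases h : v = v₀ <;> simp [h]
    have hrle : ∀ u, ∑ v, A₁ u v ≤ k := by
      intro u
      rw [hrow₁]
      by_cases h : u = u₀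
      · subst h; simp; omega
      · simp [h]; exact hrow u
    have hcle : ∀ v, ∑ u, A₁ u v ≤ k := by
      intro v
      rw [hcol₁]
      by_cases h : v = v₀
      · subst h; simp; omega
      · simp [h]; exact hcol v
    have hdef₁ : ∑ u, (k - ∑ v, A₁ u v) = n := by
      have hterm : ∀ u, (k - ∑ v, A₁ u v) + (if u = u₀ then 1 else 0) = k - ∑ v, A u v := by
        intro u
        rw [hrow₁]
        by_cases h : u = u₀
        · subst h; simp; omega
        · simp [h]
      have hsum : (∑ u, (k - ∑ v, A₁ u v)) + ∑ u, (if u = u₀ then 1 else 0) = n + 1 := by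
        rw [← Finset.sum_add_distrib, ← hdef]
        exact Finset.sum_congr rfl fun u _ => hterm u
      simp only [Finset.sum_ite_eq', Finset.mem_univ, if_true] at hsum
      omega
    obtain ⟨A', hle, hr, hc⟩ := ih A₁ hdef₁ hrle hcle
    exact ⟨A', fun u v => le_trans (by simp [hA₁]) (hle u v), hr, hc⟩

open Finset in
/-- From a symmetric matching-per-color coloring that covers each edge multiplicity,
one can extract an exact proper edge coloring by discarding surplus colors. -/
lemma koenig_aux_prune {V : Type} [Fintype V] [DecidableEq V] (w : V → V → ℕ)
    (hs : ∀ u v, w u v = w v u) (k : ℕ)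
    (M' : Fin k → V → V → Bool)
    (hsym : ∀ i u v, M' i u v = M' i v u)
    (hmatch : ∀ i u a b, M' i u a = true → M' i u b = true → a = b)
    (hcount : ∀ u v, w u v ≤ (Finset.univ.filter fun i => M' i u v = true).card) :
    ∃ M : Fin k → V → V → Bool, IsProperEdgeColoringMG w k M := by
  classical
  let e := Fintype.equivFin V
  have H : ∀ u v : V, ∃ t : Finset (Fin k),
      t ⊆ Finset.univ.filter (fun i => M' i u v = true) ∧ t.card = w u v :=
    fun u v => Finset.exists_subset_card_eq (hcount u v)
  choose T hT1 hT2 using H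
  refine ⟨fun i u v => if e u ≤ e v then decide (i ∈ T u v) else decide (i ∈ T v u), ?_, ?_, ?_⟩
  · intro i u v
    rcases le_total (e u) (e v) with h | h
    · by_cases h2 : e v ≤ e u
      · have : u = v := e.injective (le_antisymm h h2)
        subst this; rfl
      · simp [h, h2]
    · by_cases h2 : e u ≤ e v
      · have : u = v := e.injective (le_antisymm h2 h)
        subst this; rfl
      · simp [h, h2]
  · intro i u
    have hsub : ∀ a, (if e u ≤ e a then decide (i ∈ T u a) else decide (i ∈ T a u)) = true →
        M' i u a = true := by
      intro a h
      split at h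
      · have := hT1 u a (by simpa using h)
        exact (Finset.mem_filter.mp this).2
      · have := hT1 a u (by simpa using h)
        rw [hsym]
        exact (Finset.mem_filter.mp this).2
    rw [Finset.card_le_one]
    intro a ha b hb
    simp only [Finset.mem_filter, Finset.mem_univ, true_and] at ha hb
    exact hmatch i u a b (hsub a ha) (hsub b hb)
  · intro u v
    by_cases h : e u ≤ e v
    · have : (Finset.univ.filter fun i =>
          (if e u ≤ e v then decide (i ∈ T u v) else decide (i ∈ T v u)) = true) = T u v := by
        ext i; simp [h]
      rw [this, hT2]
    · have : (Finset.univ.filter fun i =>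
          (if e u ≤ e v then decide (i ∈ T u v) else decide (i ∈ T v u)) = true) = T v u := by
        ext i; simp [h]
      rw [this, hT2, hs]

/-- König: every bipartite loopless multigraph has a proper edge-coloring
with `Δ` colors, where `Δ` is the maximum degree (counting multiplicities). -/
theorem koenig_edge_coloring
    {V : Type} [Fintype V] [DecidableEq V]
    (w : V → V → ℕ) (hsymm : ∀ u v, w u v = w v u) (hloop : ∀ v, w v v = 0)
    (hbip : ∃ X : Set V, ∀ u v, 0 < w u v → (u ∈ X ↔ v ∉ X)) :
    ∃ M : Fin (Finset.univ.sup fun v => ∑ u, w v u) → V → V → Bool,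
      IsProperEdgeColoringMG w _ M := by
  classical
  obtain ⟨X, hX⟩ := hbip
  set k := Finset.univ.sup fun v => ∑ u, w v u with hk
  have hdeg : ∀ u : V, ∑ v, w u v ≤ k :=
    fun u => Finset.le_sup (f := fun v => ∑ u, w v u) (Finset.mem_univ u)
  set B : V → V → ℕ := fun u v => if u ∈ X then w u v else 0 with hB
  have hBrow : ∀ u, ∑ v, B u v ≤ k := by
    intro u
    by_cases h : u ∈ X
    · simp only [hB, h, if_true]; exact hdeg u
    · simp [hB, h]
  have hBcol : ∀ v, ∑ u, B u v ≤ k := by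
    intro v
    calc ∑ u, B u v ≤ ∑ u, w u v := by
          refine Finset.sum_le_sum fun u _ => ?_
          simp only [hB]; split <;> omega
    _ = ∑ u, w v u := Finset.sum_congr rfl fun u _ => hsymm u v
    _ ≤ k := hdeg v
  obtain ⟨A, hAB, hArow, hAcol⟩ := koenig_aux_complete k _ B rfl hBrow hBcol
  obtain ⟨σ, hσ⟩ := koenig_aux_decomp k A hArow hAcol
  set M' : Fin k → V → V → Bool := fun i u v =>
    decide ((u ∈ X ∧ v ∉ X ∧ σ i u = v) ∨ (v ∈ X ∧ u ∉ X ∧ σ i v = u)) with hM'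
  refine koenig_aux_prune w hsymm k M' ?_ ?_ ?_
  · intro i u v
    simp only [hM', decide_eq_decide]
    tauto
  · intro i u a b ha hb
    simp only [hM', decide_eq_true_eq] at ha hb
    by_cases h : u ∈ X
    · rcases ha with ⟨_, _, h1⟩ | ⟨_, hc, _⟩
      · rcases hb with ⟨_, _, h2⟩ | ⟨_, hc, _⟩
        · rw [← h1, ← h2]
        · exact absurd h hc
      · exact absurd h hc
    · rcases ha with ⟨hc, _, _⟩ | ⟨_, _, h1⟩
      · exact absurd hc h
      · rcases hb with ⟨hc, _, _⟩ | ⟨_, _, h2⟩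
        · exact absurd hc h
        · exact (σ i).injective (h1.trans h2.symm)
  · intro u v
    rcases Nat.eq_zero_or_pos (w u v) with h0 | h0
    · simp [h0]
    have hiff := hX u v h0
    by_cases hu : u ∈ X
    · have hv : v ∉ X := hiff.mp hu
      have hfe : (Finset.univ.filter fun i => M' i u v = true) =
          (Finset.univ.filter fun i => σ i u = v) := by
        ext i
        simp only [Finset.mem_filter, Finset.mem_univ, true_and, hM', decide_eq_true_eq]
        constructor
        · rintro (⟨_, _, h⟩ | ⟨_, hc, _⟩)
          · exact h
          · exact absurd hu hc
        · intro h; exact Or.inl ⟨hu, hv, h⟩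
      rw [hfe]
      have hcard : (Finset.univ.filter fun i => σ i u = v).card = A u v := by
        rw [hσ u v, Finset.card_filter]
      rw [hcard]
      calc w u v = B u v := by simp [hB, hu]
      _ ≤ A u v := hAB u v
    · have hv : v ∈ X := by
        by_contra hv
        exact hu (hiff.mpr hv)
      have hfe : (Finset.univ.filter fun i => M' i u v = true) =
          (Finset.univ.filter fun i => σ i v = u) := by
        ext i
        simp only [Finset.mem_filter, Finset.mem_univ, true_and, hM', decide_eq_true_eq]
        constructor
        · rintro (⟨hc, _, _⟩ | ⟨_, _, h⟩)
          · exact absurd hc hu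
          · exact h
        · intro h; exact Or.inr ⟨hv, hu, h⟩
      rw [hfe]
      have hcard : (Finset.univ.filter fun i => σ i v = u).card = A v u := by
        rw [hσ v u, Finset.card_filter]
      rw [hcard]
      calc w u v = w v u := hsymm u v
      _ = B v u := by simp [hB, hv]
      _ ≤ A v u := hAB v u
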